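/- For waning functions f and g, the topology T_f is contained in T_g if and only if g(n) ≤ f(n) for all n ∈ ω. In particular, T_f = T_g if and only if f = g. -/

import Mathlib

/-!
If `g ≤ f` on `ω`, every `U_{f,n,X}` is `T_g`-open: around `h` in it, fix the pairs of `h` that
hit `n` points of `im h \ X` and the `k` points of `X ∩ im h`, and ask for `U_{g,n+k,X \ im h}`.
A waning `g` drops by at least one at each step until it reaches `0`, so
`k + g(n+k) ≤ max k (g n) ≤ f n`.

If `f n < g n`, the identity on an `n`-set `B` disjoint from `X = {0, …, f n}` lies in
`U_{f,n,X}`. Every subbasic `T_g`-neighbourhood of it also contains its extension by `y + c ↦ y`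
(`y ∈ X`) for all large `c`, because `|Y ∩ (B ∪ X)| ≤ (n - m) + g n ≤ g m` inside `U_{g,m,Y}`;
but that extension meets `X` in `f n + 1` points.

Finally, a waning function is determined by its values on `ω`, since `f ω = ⨅ n, f n`.
-/

open Set Classical

noncomputable section

/-- A partial injection (partial bijection) on ℕ, viewed as a set of pairs. -/
def IsPInj (g : Set (ℕ × ℕ)) : Prop :=
  ∀ ⦃a b c d : ℕ⦄, (a, b) ∈ g → (c, d) ∈ g → (a = c ↔ b = d)

/-- Domain of a partial injection. -/
def pdom (g : Set (ℕ × ℕ)) : Set ℕ := {x | ∃ y, (x, y) ∈ g}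

/-- Image of a partial injection. -/
def pim (g : Set (ℕ × ℕ)) : Set ℕ := {y | ∃ x, (x, y) ∈ g}

/-- Restriction of a partial injection to `{0, …, r-1}`. -/
def pres (g : Set (ℕ × ℕ)) (r : ℕ) : Set (ℕ × ℕ) := {p ∈ g | p.1 < r}

/-- A waning function `f : ω + 1 → ω + 1`. -/
def Waning (f : ℕ∞ → ℕ∞) : Prop :=
  Antitone f ∧
    ((∀ i, f i = ⊤) ∨
      ((∃ i : ℕ, f i ≠ ⊤) ∧
        ∀ j : ℕ, f j ≠ 0 → f j ≠ ⊤ → f ((j + 1 : ℕ)) < f j))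

/-- The symmetric inverse monoid `I_ℕ` as a type: partial bijections on `ℕ`. -/
def PB : Type := {g : Set (ℕ × ℕ) // IsPInj g}

/-- `U_{x,y} = {h : (x,y) ∈ h}`. -/
def Uxy (x y : ℕ) : Set PB := {h | (x, y) ∈ h.1}

/-- `W_x = {h : x ∉ dom h}`. -/
def Wlow (x : ℕ) : Set PB := {h | x ∉ pdom h.1}

/-- The subbasis for the topology `I₂`. -/
def I2sub : Set (Set PB) := {S | ∃ x y, S = Uxy x y} ∪ {S | ∃ x, S = Wlow x}

/-- The topology `I₂` on `I_ℕ`. -/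
def I2 : TopologicalSpace PB := .generateFrom I2sub

/-- `U_{f,n,X} = {g : |im(g) \ X| ≥ n and |X ∩ im(g)| ≤ f(n)}`. -/
def UfnX (f : ℕ∞ → ℕ∞) (n : ℕ) (X : Finset ℕ) : Set PB :=
  {g | (n : ℕ∞) ≤ (pim g.1 \ ↑X).encard ∧ ((↑X : Set ℕ) ∩ pim g.1).encard ≤ f n}

/-- The topology `T_f`: the least topology containing `I₂` and all the sets `U_{f,n,X}`. -/
def Tw (f : ℕ∞ → ℕ∞) : TopologicalSpace PB :=
  .generateFrom (I2sub ∪ {S | ∃ n X, S = UfnX f n X})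

open Topology

namespace Waning

variable {f : ℕ∞ → ℕ∞}

lemma lt_of_ne_zero_of_ne_top (hf : Waning f) {j : ℕ} (h0 : f j ≠ 0) (htop : f j ≠ ⊤) :
    f (j + 1 : ℕ) < f j := by
  rcases hf.2 with hconst | ⟨-, hstep⟩
  · exact absurd (hconst j) htop
  · exact hstep j h0 htop

lemma add_le (hf : Waning f) (m k : ℕ) (hk : f (m + k : ℕ) ≠ 0) : k + f (m + k : ℕ) ≤ f m := by
  by_cases hm : f m = ⊤
  · simp [hm]
  induction k with
  | zero => simp
  | succ k ih =>
    have hanti : f (m + (k + 1) : ℕ) ≤ f (m + k : ℕ) := hf.1 (by simp)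
    have h0 : f (m + k : ℕ) ≠ 0 := fun h => hk (le_antisymm (h ▸ hanti) zero_le)
    have htop : f (m + k : ℕ) ≠ ⊤ := ne_top_of_le_ne_top hm (hf.1 (by simp))
    have hlt : f (m + (k + 1) : ℕ) + 1 ≤ f (m + k : ℕ) :=
      (ENat.add_one_le_iff' htop).2 (hf.lt_of_ne_zero_of_ne_top h0 htop)
    calc ((k + 1 : ℕ) : ℕ∞) + f (m + (k + 1) : ℕ) = k + (f (m + (k + 1) : ℕ) + 1) := by
          push_cast; ring
      _ ≤ k + f (m + k : ℕ) := add_le_add_right hlt _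
      _ ≤ f m := ih h0

lemma add_le_of_le (hf : Waning f) {a : ℕ∞} {n k : ℕ} (hk : (k : ℕ∞) ≤ a) (hn : f n ≤ a) :
    k + f (n + k : ℕ) ≤ a := by
  by_cases h0 : f (n + k : ℕ) = 0
  · rwa [h0, add_zero]
  · exact (hf.add_le n k h0).trans hn

lemma exists_eq_zero (hf : Waning f) (hne : ∃ i : ℕ, f i ≠ ⊤) : ∃ m : ℕ, f m = 0 := by
  obtain ⟨i, hi⟩ := hne
  refine ⟨i + (f i).toNat, by_contra fun h0 => h0 ?_⟩
  have h := hf.add_le i _ h0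
  rw [ENat.natCast_toNat hi] at h
  exact nonpos_iff_eq_zero.1 ((ENat.add_le_add_iff_left hi).1 (h.trans_eq (add_zero _).symm))

lemma apply_top (hf : Waning f) : f ⊤ = ⨅ n : ℕ, f n := by
  refine le_antisymm (le_iInf fun n => hf.1 le_top) ?_
  rcases hf.2 with hconst | ⟨hne, -⟩
  · simp [hconst]
  · obtain ⟨m, hm⟩ := hf.exists_eq_zero hne
    exact (iInf_le _ m).trans (hm ▸ zero_le)

lemma ext_nat {g : ℕ∞ → ℕ∞} (hf : Waning f) (hg : Waning g) (h : ∀ n : ℕ, f n = g n) : f = g := by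
  funext a
  induction a using ENat.recTopCoe with
  | top => simp only [hf.apply_top, hg.apply_top, h]
  | coe n => exact h n

lemma encard_inter_union_le (hf : Waning f) {B X Y : Set ℕ} {m n : ℕ} (hB : B.encard = n)
    (hm : m ≤ (B \ Y).encard) (hX : X.encard ≤ f n) (hn : f n ≠ 0) :
    (Y ∩ (B ∪ X)).encard ≤ f m := by
  obtain ⟨k, rfl⟩ : ∃ k, n = m + k := Nat.exists_eq_add_of_le <| by
    exact_mod_cast hm.trans (hB ▸ Set.encard_mono Set.sdiff_subset)
  have hBY : (B ∩ Y).encard ≤ k := by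
    have hsplit := Set.encard_sdiff_add_encard_inter B Y
    rw [hB, Nat.cast_add] at hsplit
    exact (ENat.add_le_add_iff_left (ENat.natCast_ne_top m)).1 (hsplit ▸ add_le_add_left hm _)
  calc (Y ∩ (B ∪ X)).encard ≤ (B ∩ Y ∪ X).encard := Set.encard_mono <| by
        rintro y ⟨hyY, hyB | hyX⟩
        exacts [.inl ⟨hyB, hyY⟩, .inr hyX]
    _ ≤ k + f (m + k : ℕ) := (Set.encard_union_le _ _).trans (add_le_add hBY hX)
    _ ≤ f m := hf.add_le m k hn

end Waning

lemma IsPInj.union {g h : Set (ℕ × ℕ)} (hg : IsPInj g) (hh : IsPInj h)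
    (hdom : Disjoint (pdom g) (pdom h)) (him : Disjoint (pim g) (pim h)) : IsPInj (g ∪ h) := by
  have cross : ∀ ⦃a b c d⦄, (a, b) ∈ g → (c, d) ∈ h → a ≠ c ∧ b ≠ d := fun a b c d hab hcd =>
    ⟨fun hac => hdom.ne_of_mem ⟨b, hab⟩ ⟨d, hac ▸ hcd⟩ rfl,
      fun hbd => him.ne_of_mem ⟨a, hab⟩ ⟨c, hbd ▸ hcd⟩ rfl⟩
  rintro a b c d (hab | hab) (hcd | hcd)
  · exact hg hab hcd
  · exact iff_of_false (cross hab hcd).1 (cross hab hcd).2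
  · exact iff_of_false (cross hcd hab).1.symm (cross hcd hab).2.symm
  · exact hh hab hcd

lemma pdom_union (g h : Set (ℕ × ℕ)) : pdom (g ∪ h) = pdom g ∪ pdom h := by
  ext; simp [pdom, exists_or]

lemma pim_union (g h : Set (ℕ × ℕ)) : pim (g ∪ h) = pim g ∪ pim h := by
  ext; simp [pim, exists_or]

def shiftPB (s : Set ℕ) (c : ℕ) : PB :=
  ⟨{p | p.2 ∈ s ∧ p.1 = p.2 + c}, by
    rintro a b c d ⟨-, hab⟩ ⟨-, hcd⟩
    simp only at hab hcd
    omega⟩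

lemma pim_shiftPB (s : Set ℕ) (c : ℕ) : pim (shiftPB s c).1 = s := by
  ext y; simp [pim, shiftPB]

lemma pdom_shiftPB (s : Set ℕ) (c : ℕ) : pdom (shiftPB s c).1 = (· + c) '' s := by
  ext x; simp [pdom, shiftPB, eq_comm]

lemma isOpen_Tw_Uxy (f : ℕ∞ → ℕ∞) (x y : ℕ) : IsOpen[Tw f] (Uxy x y) :=
  .basic _ (.inl (.inl ⟨x, y, rfl⟩))

lemma isOpen_Tw_UfnX (f : ℕ∞ → ℕ∞) (n : ℕ) (X : Finset ℕ) : IsOpen[Tw f] (UfnX f n X) :=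
  .basic _ (.inr ⟨n, X, rfl⟩)

def pinned (h : PB) (T : Set ℕ) : Set PB := {h' | ∀ p ∈ h.1, p.2 ∈ T → p ∈ h'.1}

lemma isOpen_pinned (f : ℕ∞ → ℕ∞) (h : PB) {T : Set ℕ} (hT : T.Finite) :
    IsOpen[Tw f] (pinned h T) := by
  have hfin : {p ∈ h.1 | p.2 ∈ T}.Finite := by
    refine Set.Finite.of_finite_image (f := Prod.snd) (hT.subset ?_) ?_
    · rintro _ ⟨p, ⟨-, hp⟩, rfl⟩
      exact hp
    · rintro ⟨a, b⟩ ⟨hab, -⟩ ⟨c, d⟩ ⟨hcd, -⟩ (rfl : b = d)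
      rw [(h.2 hab hcd).2 rfl]
  have hpinned : pinned h T = ⋂ p ∈ {p ∈ h.1 | p.2 ∈ T}, Uxy p.1 p.2 := by
    ext h'
    simp [pinned, Uxy]
  rw [hpinned]
  let := Tw f
  exact hfin.isOpen_biInter fun p _ => isOpen_Tw_Uxy f p.1 p.2

lemma inter_pim_subset_of_mem_pinned {h h' : PB} {T : Set ℕ} (hh' : h' ∈ pinned h T) :
    T ∩ pim h.1 ⊆ pim h'.1 :=
  fun _ ⟨hyT, x, hxy⟩ => ⟨x, hh' _ hxy hyT⟩

lemma pinned_inter_UfnX_subset {f g : ℕ∞ → ℕ∞} (hg : Waning g) (hle : ∀ n : ℕ, g n ≤ f n)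
    {h : PB} {X : Finset ℕ} {P : Set ℕ} {n k : ℕ} (hP : P ⊆ pim h.1 \ X) (hPn : P.encard = n)
    (hk : ((X : Set ℕ) ∩ pim h.1).encard = k) (hkf : (k : ℕ∞) ≤ f n) :
    pinned h (P ∪ (X ∩ pim h.1)) ∩ UfnX g (n + k) (X.filter (· ∉ pim h.1)) ⊆ UfnX f n X := by
  rintro h' ⟨hpin, -, hZ'⟩
  have hPK := inter_pim_subset_of_mem_pinned hpin
  refine ⟨?_, ?_⟩
  · calc (n : ℕ∞) = P.encard := hPn.symm
      _ ≤ (pim h'.1 \ X).encard := Set.encard_mono fun y hy =>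
          ⟨hPK ⟨.inl hy, (hP hy).1⟩, (hP hy).2⟩
  · set Z := X.filter (· ∉ pim h.1)
    have hcover : (X : Set ℕ) ∩ pim h'.1 ⊆ (X ∩ pim h.1) ∪ ((Z : Set ℕ) ∩ pim h'.1) := by
      rintro y ⟨hyX, hy⟩
      by_cases hyh : y ∈ pim h.1
      · exact .inl ⟨hyX, hyh⟩
      · exact .inr ⟨by simpa [Z] using ⟨hyX, hyh⟩, hy⟩
    calc ((X : Set ℕ) ∩ pim h'.1).encard
        ≤ ((X : Set ℕ) ∩ pim h.1).encard + ((Z : Set ℕ) ∩ pim h'.1).encard :=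
          (Set.encard_mono hcover).trans (Set.encard_union_le _ _)
      _ ≤ k + g (n + k : ℕ) := by rw [hk]; push_cast; exact add_le_add_right hZ' _
      _ ≤ f n := hg.add_le_of_le hkf (hle n)

lemma isOpen_UfnX_of_le {f g : ℕ∞ → ℕ∞} (hg : Waning g) (hle : ∀ n : ℕ, g n ≤ f n) (n : ℕ)
    (X : Finset ℕ) : IsOpen[Tw g] (UfnX f n X) := by
  let := Tw g
  refine isOpen_iff_forall_mem_open.2 fun h ⟨hn, hX⟩ => ?_
  set K := (X : Set ℕ) ∩ pim h.1
  have hKfin : K.Finite := X.finite_toSet.inter_of_left _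
  obtain ⟨k, hk⟩ : ∃ k : ℕ, K.encard = k := ⟨_, hKfin.encard_eq_coe⟩
  obtain ⟨P, hP, hPn⟩ := Set.exists_subset_encard_eq hn
  set Z : Finset ℕ := X.filter (· ∉ pim h.1)
  refine ⟨_, pinned_inter_UfnX_subset hg hle hP hPn hk (hk ▸ hX),
    (isOpen_pinned _ h ((Set.finite_of_encard_eq_coe hPn).union hKfin)).inter
      (isOpen_Tw_UfnX g _ _), fun p hp _ => hp, ?_, ?_⟩
  · have hPK : P ∪ K ⊆ pim h.1 \ Z := by
      rintro y (hy | ⟨-, hy⟩)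
      · exact ⟨(hP hy).1, fun hyZ => (hP hy).2 (Finset.mem_filter.1 hyZ).1⟩
      · exact ⟨hy, fun hyZ => (Finset.mem_filter.1 hyZ).2 hy⟩
    have hdisj : Disjoint P K := Set.disjoint_left.2 fun y hy hyK => (hP hy).2 hyK.1
    calc ((n + k : ℕ) : ℕ∞) = (P ∪ K).encard := by
          rw [Set.encard_union_eq hdisj, hPn, hk]; push_cast; rfl
      _ ≤ (pim h.1 \ Z).encard := Set.encard_mono hPK
  · have hZ : (Z : Set ℕ) ∩ pim h.1 = ∅ := by
      ext y
      simp [Z]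
    rw [hZ, Set.encard_empty]
    exact zero_le

lemma eventually_mem_of_mem_subbasis {g : ℕ∞ → ℕ∞} (hg : Waning g) {h0 : PB} {h1 : ℕ → PB}
    {X : Set ℕ} {n : ℕ} (hsub : ∀ c, h0.1 ⊆ (h1 c).1) (hdom : ∀ c, pdom (h1 c).1 ⊆ pdom h0.1 ∪ Ici c)
    (hpim : ∀ c, pim (h1 c).1 = pim h0.1 ∪ X) (hn : (pim h0.1).encard = n) (hX : X.encard ≤ g n)
    (hgn : g n ≠ 0) {s : Set PB} (hs : s ∈ I2sub ∪ {S | ∃ m Y, S = UfnX g m Y}) (h0s : h0 ∈ s) :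
    ∀ᶠ c in Filter.atTop, h1 c ∈ s := by
  rcases hs with (⟨x, y, rfl⟩ | ⟨z, rfl⟩) | ⟨m, Y, rfl⟩
  · exact .of_forall fun c => hsub c h0s
  · filter_upwards [Filter.eventually_gt_atTop z] with c hc hz
    rcases hdom c hz with hz | hz
    exacts [h0s hz, absurd hz (not_le.2 hc)]
  · obtain ⟨hm, -⟩ := h0s
    refine .of_forall fun c => ⟨?_, ?_⟩ <;> rw [hpim]
    · exact hm.trans (Set.encard_mono (Set.sdiff_subset_sdiff_left Set.subset_union_left))
    · exact hg.encard_inter_union_le hn hm hX hgn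

lemma le_of_Tw_le {f g : ℕ∞ → ℕ∞} (hg : Waning g) (hfg : Tw g ≤ Tw f) (n : ℕ) : g n ≤ f n := by
  by_contra! hlt
  obtain ⟨F, hF⟩ : ∃ F : ℕ, f n = F := ⟨_, (ENat.natCast_toNat hlt.ne_top).symm⟩
  set X : Finset ℕ := Finset.range (F + 1)
  set B : Set ℕ := ↑(Finset.Ico (F + 1) (F + 1 + n))
  have hB : B.encard = n := by rw [Set.encard_coe_eq_coe_finsetCard]; simp
  have hX : (X : Set ℕ).encard = F + 1 := by rw [Set.encard_coe_eq_coe_finsetCard]; simp [X]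
  have hXB : Disjoint B X := by
    simp only [B, X, Set.disjoint_left]
    simp
    omega
  set h0 := shiftPB B 0
  have hpim0 : pim h0.1 = B := pim_shiftPB B 0
  have hdom (c : ℕ) : Disjoint (pdom h0.1) (pdom (shiftPB X (F + 1 + n + c)).1) := by
    simp only [h0, B, X, pdom_shiftPB, Set.disjoint_left]
    simp
    omega
  let h1 (c : ℕ) : PB := ⟨h0.1 ∪ (shiftPB X (F + 1 + n + c)).1,
    h0.2.union (shiftPB _ _).2 (hdom c) (by rwa [hpim0, pim_shiftPB])⟩
  have hpim1 (c : ℕ) : pim (h1 c).1 = pim h0.1 ∪ X := by simp only [h1, pim_union, pim_shiftPB]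
  have hdom1 (c : ℕ) : pdom (h1 c).1 ⊆ pdom h0.1 ∪ Ici c := by
    rw [pdom_union, pdom_shiftPB X]
    rintro x (hx | ⟨y, -, rfl⟩)
    exacts [.inl hx, .inr (by simp only [mem_Ici]; omega)]
  have hXg : (X : Set ℕ).encard ≤ g n := by
    rw [hX, ENat.add_one_le_iff (ENat.natCast_ne_top F), ← hF]
    exact hlt
  have h0_mem : h0 ∈ UfnX f n X := by
    simp [UfnX, hpim0, hXB.symm.inter_eq, hXB.sdiff_eq_left, hB]
  let := Tw g
  obtain ⟨_, ⟨T, ⟨hTfin, hTsub⟩, rfl⟩, h0T, hTU⟩ :=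
    (TopologicalSpace.isTopologicalBasis_of_subbasis rfl).exists_subset_of_mem_open h0_mem
      (hfg _ (isOpen_Tw_UfnX f n X))
  obtain ⟨c, hc⟩ := (hTfin.eventually_all.2 fun s hs =>
    eventually_mem_of_mem_subbasis hg (h1 := h1) (fun _ => subset_union_left) hdom1 hpim1
      (hpim0 ▸ hB) hXg (pos_of_gt hlt).ne' (hTsub hs) (h0T s hs)).exists
  have hcontra := (hTU hc).2
  rw [hpim1, hpim0, Set.inter_eq_self_of_subset_left Set.subset_union_right, hX, hF] at hcontra
  exact absurd hcontra (by norm_cast; omega)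

lemma Tw_le_Tw_iff {f g : ℕ∞ → ℕ∞} (hg : Waning g) : Tw g ≤ Tw f ↔ ∀ n : ℕ, g n ≤ f n := by
  refine ⟨le_of_Tw_le hg, fun hle => le_generateFrom ?_⟩
  rintro s (hs | ⟨n, X, rfl⟩)
  exacts [.basic s (.inl hs), isOpen_UfnX_of_le hg hle n X]

/-- For waning functions `f` and `g`, `T_f ⊆ T_g` iff `g(n) ≤ f(n)` for all `n ∈ ω`;
in particular `T_f = T_g` iff `f = g`. -/
theorem Tw_subset_iff (f g : ℕ∞ → ℕ∞) (hf : Waning f) (hg : Waning g) :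
    ((∀ U : Set PB, @IsOpen PB (Tw f) U → @IsOpen PB (Tw g) U) ↔ ∀ n : ℕ, g n ≤ f n) ∧
    (Tw f = Tw g ↔ f = g) := by
  refine ⟨TopologicalSpace.le_def.symm.trans (Tw_le_Tw_iff hg), fun hfg => ?_, fun hfg => hfg ▸ rfl⟩
  exact hf.ext_nat hg fun n =>
    le_antisymm ((Tw_le_Tw_iff hf).1 hfg.le n) ((Tw_le_Tw_iff hg).1 hfg.ge n)

end
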